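/- Let u, v, w ∈ V with uw, uv, vw ∈ E. Let U ⊂ V be such that uv, uw ∈ δ(U) and let W ⊂ V be such that uw, vw ∈ δ(W). If θ_{uw} + θ_{uv} ≥ Σ_{e ∈ δ(U) \ {uw, uv}} |θ_e| and θ_{uw} + θ_{vw} ≥ Σ_{e ∈ δ(W) \ {uw, vw}} |θ_e|, then there exists an optimal solution x* of the max-cut problem min_{x ∈ CUT(G)} ⟨θ, x⟩ with x*_{uw} = 0. -/
import Mathlib


variable {V : Type} [Fintype V] [DecidableEq V]

/-- The set of edges of `G` with one endpoint in `U` and the other in `W` (δ(U, W)). -/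
def btw (G : SimpleGraph V) [DecidableRel G.Adj] (U W : Finset V) : Finset (Sym2 V) :=
  G.edgeFinset.filter fun e => ∃ x ∈ U, ∃ y ∈ W, e = s(x, y)

/-- The cut δ(U) := δ(U, V \ U). -/
def cutδ (G : SimpleGraph V) [DecidableRel G.Adj] (U : Finset V) : Finset (Sym2 V) :=
  btw G U Uᶜ

/-- `M` is (the edge set of) a cut of `G`, i.e. `M = δ(U)` for some `U ⊆ V`. -/
def IsCut (G : SimpleGraph V) [DecidableRel G.Adj] (M : Finset (Sym2 V)) : Prop :=
  M ⊆ G.edgeFinset ∧ ∃ U : Finset V, ∀ x y, G.Adj x y → (s(x, y) ∈ M ↔ (x ∈ U ↔ y ∉ U))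

lemma mem_cutδ {G : SimpleGraph V} [DecidableRel G.Adj] {U : Finset V} {x y : V} :
    s(x, y) ∈ cutδ G U ↔ G.Adj x y ∧ (x ∈ U ↔ y ∉ U) := by
  simp only [cutδ, _root_.btw, Finset.mem_filter, SimpleGraph.mem_edgeFinset, SimpleGraph.mem_edgeSet,
    Finset.mem_compl, Sym2.eq_iff]
  constructor
  · rintro ⟨hadj, a, ha, b, hb, (⟨rfl, rfl⟩ | ⟨rfl, rfl⟩)⟩ <;> exact ⟨by assumption, by tauto⟩
  · rintro ⟨hadj, h⟩
    by_cases hx : x ∈ U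
    · exact ⟨hadj, x, hx, y, h.mp hx, Or.inl ⟨rfl, rfl⟩⟩
    · refine ⟨hadj, y, ?_, x, hx, Or.inr ⟨rfl, rfl⟩⟩
      by_contra hy; exact hx (h.mpr fun hyU => hy hyU)

open scoped symmDiff in
set_option maxHeartbeats 1000000 in
lemma key_lemma (G : SimpleGraph V) [DecidableRel G.Adj] (θ : Sym2 V → ℝ)
    (e1 e2 : Sym2 V) (hne : e1 ≠ e2) (U : Finset V)
    (h1 : e1 ∈ cutδ G U) (h2 : e2 ∈ cutδ G U)
    (hbound : ∑ e ∈ cutδ G U \ {e1, e2}, |θ e| ≤ θ e1 + θ e2)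
    (N : Finset (Sym2 V)) (hN : IsCut G N) (he1 : e1 ∈ N) (he2 : e2 ∈ N) :
    ∃ M, IsCut G M ∧ (∑ e ∈ M, θ e ≤ ∑ e ∈ N, θ e) ∧ e1 ∉ M := by
  obtain ⟨hNE, S, hS⟩ := hN
  set C := cutδ G U with hC
  refine ⟨N ∆ C, ⟨?_, S ∆ U, ?_⟩, ?_, ?_⟩
  · intro e he
    rw [Finset.mem_symmDiff] at he
    rcases he with ⟨he, -⟩ | ⟨he, -⟩
    · exact hNE he
    · exact Finset.filter_subset _ _ he
  · intro x y hxy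
    rw [Finset.mem_symmDiff, hS x y hxy, hC, mem_cutδ, Finset.mem_symmDiff,
      Finset.mem_symmDiff]
    simp only [hxy, true_and]
    tauto
  · -- cost bound
    have hP : ({e1, e2} : Finset (Sym2 V)) ⊆ N ∩ C := by
      simp [Finset.insert_subset_iff, he1, he2, h1, h2]
    have hsd : ∑ e ∈ N ∆ C, θ e = ∑ e ∈ N \ C, θ e + ∑ e ∈ C \ N, θ e := by
      rw [symmDiff_def, Finset.sup_eq_union, Finset.sum_union disjoint_sdiff_sdiff]
    have hN' : ∑ e ∈ N, θ e = ∑ e ∈ N \ C, θ e + ∑ e ∈ N ∩ C, θ e := by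
      rw [add_comm, Finset.sum_inter_add_sum_sdiff]
    have hI : ∑ e ∈ N ∩ C, θ e
        = ∑ e ∈ (N ∩ C) \ {e1, e2}, θ e + (θ e1 + θ e2) := by
      rw [← Finset.sum_pair hne, Finset.sum_sdiff hP]
    have habs : ∑ e ∈ C \ N, θ e + ∑ e ∈ (N ∩ C) \ {e1, e2}, (-θ e)
        ≤ ∑ e ∈ C \ {e1, e2}, |θ e| := by
      calc ∑ e ∈ C \ N, θ e + ∑ e ∈ (N ∩ C) \ {e1, e2}, (-θ e)
          ≤ ∑ e ∈ C \ N, |θ e| + ∑ e ∈ (N ∩ C) \ {e1, e2}, |θ e| := by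
            gcongr with e he e he
            · exact le_abs_self _
            · exact neg_le_abs _
        _ = ∑ e ∈ (C \ N) ∪ ((N ∩ C) \ {e1, e2}), |θ e| := by
            rw [Finset.sum_union]
            refine Finset.disjoint_left.mpr fun a ha hb => ?_
            exact (Finset.mem_sdiff.mp ha).2 (Finset.mem_inter.mp (Finset.mem_sdiff.mp hb).1).1
        _ ≤ ∑ e ∈ C \ {e1, e2}, |θ e| := by
            apply Finset.sum_le_sum_of_subset_of_nonneg
            · intro a ha
              rcases Finset.mem_union.mp ha with ha | ha
              · rw [Finset.mem_sdiff] at ha ⊢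
                refine ⟨ha.1, fun hmem => ha.2 ?_⟩
                rcases Finset.mem_insert.mp hmem with rfl | hmem
                · exact he1
                · rw [Finset.mem_singleton.mp hmem]; exact he2
              · rw [Finset.mem_sdiff] at ha ⊢
                exact ⟨(Finset.mem_inter.mp ha.1).2, ha.2⟩
            · intros; exact abs_nonneg _
    rw [hsd, hN', hI]
    rw [Finset.sum_neg_distrib] at habs
    linarith [hbound]
  · rw [Finset.mem_symmDiff]
    push_neg
    exact ⟨fun _ => h1, fun _ => he1⟩

/-- triangle criterion for max-cut (in minimization form). -/
theorem stmt_7 (G : SimpleGraph V) [DecidableRel G.Adj] (θ : Sym2 V → ℝ)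
    (u v w : V) (huw : G.Adj u w) (huv : G.Adj u v) (hvw : G.Adj v w)
    (U : Finset V) (hU : U ⊂ Finset.univ)
    (huvU : s(u, v) ∈ cutδ G U) (huwU : s(u, w) ∈ cutδ G U)
    (W : Finset V) (hW : W ⊂ Finset.univ)
    (huwW : s(u, w) ∈ cutδ G W) (hvwW : s(v, w) ∈ cutδ G W)
    (h1 : ∑ e ∈ cutδ G U \ {s(u, w), s(u, v)}, |θ e| ≤ θ (s(u, w)) + θ (s(u, v)))
    (h2 : ∑ e ∈ cutδ G W \ {s(u, w), s(v, w)}, |θ e| ≤ θ (s(u, w)) + θ (s(v, w))) :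
    ∃ M, IsCut G M ∧
      (∀ N, IsCut G N → ∑ e ∈ M, θ e ≤ ∑ e ∈ N, θ e) ∧ s(u, w) ∉ M := by
  classical
  -- there is an optimal cut N
  have hempty : IsCut G (∅ : Finset (Sym2 V)) := by
    refine ⟨Finset.empty_subset _, ∅, fun x y _ => ?_⟩
    simp
  obtain ⟨N, hNmem, hNmin⟩ := Finset.exists_min_image
    (Finset.univ.filter fun M => IsCut G M) (fun M => ∑ e ∈ M, θ e)
    ⟨∅, by simp [hempty]⟩
  have hNcut : IsCut G N := (Finset.mem_filter.mp hNmem).2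
  have hNopt : ∀ N', IsCut G N' → ∑ e ∈ N, θ e ≤ ∑ e ∈ N', θ e := by
    intro N' hN'
    exact hNmin N' (Finset.mem_filter.mpr ⟨Finset.mem_univ _, hN'⟩)
  by_cases huwN : s(u, w) ∈ N
  · -- distinctness facts
    have hne1 : s(u, w) ≠ s(u, v) := by
      intro h
      rcases Sym2.eq_iff.mp h with ⟨-, h⟩ | ⟨h, -⟩
      · exact hvw.ne h.symm
      · exact huv.ne h
    have hne2 : s(u, w) ≠ s(v, w) := by
      intro h
      rcases Sym2.eq_iff.mp h with ⟨h, -⟩ | ⟨h, -⟩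
      · exact huv.ne h
      · exact huw.ne h
    obtain ⟨hNE, S, hS⟩ := hNcut
    have hsep : u ∈ S ↔ w ∉ S := (hS u w huw).mp huwN
    by_cases hvS : (u ∈ S ↔ v ∉ S)
    · -- uv ∈ N : use U
      have huvN : s(u, v) ∈ N := (hS u v huv).mpr hvS
      obtain ⟨M, hM, hle, hnot⟩ := key_lemma G θ (s(u, w)) (s(u, v)) hne1 U
        huwU huvU h1 N ⟨hNE, S, hS⟩ huwN huvN
      exact ⟨M, hM, fun N' hN' => le_trans hle (hNopt N' hN'), hnot⟩
    · -- vw ∈ N : use W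
      have hvwN : s(v, w) ∈ N := by
        rw [hS v w hvw]
        tauto
      obtain ⟨M, hM, hle, hnot⟩ := key_lemma G θ (s(u, w)) (s(v, w)) hne2 W
        huwW hvwW h2 N ⟨hNE, S, hS⟩ huwN hvwN
      exact ⟨M, hM, fun N' hN' => le_trans hle (hNopt N' hN'), hnot⟩
  · exact ⟨N, hNcut, hNopt, huwN⟩
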